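/- arXiv:0911.4957 — 5 statements merged into one kernel-verified Lean document; each statement's English description precedes it below -/
import Mathlib

section
/- Let a, a', b, b' be points of the upper half-plane ℍ with a ≠ a' and b ≠ b'. If the perpendicular bisector sets coincide, i.e. {x ∈ ℍ : dist(x,a) = dist(x,a')} = {x ∈ ℍ : dist(x,b) = dist(x,b')}, then dist(a,b) = dist(a',b'). -/
/-!
By the cosh formula, `dist z p = dist z q` iff `q.im |z - p|² = p.im |z - q|²`, so the bisector
of `(p, q)` is the zero set in ℍ of a real quadric `A |z|² - 2 M Re z + C` with discriminant
`M² - A C = p.im q.im |p - q|² > 0`. Such a zero set is a geodesic (a vertical line or a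
half-circle centred on ℝ), so it contains two distinct points, and two points of ℍ determine the
coefficients up to a scalar. Hence the quadric of `(a, a')` is `t` times that of `(b, b')`.
Evaluating this at `b` and `a'` and comparing discriminants yields
`a'.im b'.im |a - b|² = a.im b.im |a' - b'|²`, i.e. `dist a b = dist a' b'`.
-/

open UpperHalfPlane

open Complex (normSq)

namespace UpperHalfPlane

def quadric : ℝ × ℝ × ℝ → ℂ → ℝ
  | (A, M, C), z => A * normSq z - 2 * M * z.re + C

def quadricDiscr : ℝ × ℝ × ℝ → ℝ
  | (A, M, C) => M ^ 2 - A * C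

lemma quadric_smul (t : ℝ) (w : ℝ × ℝ × ℝ) (z : ℂ) : quadric (t • w) z = t * quadric w z := by
  obtain ⟨A, M, C⟩ := w
  simp only [quadric, Prod.smul_mk, smul_eq_mul]
  ring

lemma quadricDiscr_smul (t : ℝ) (w : ℝ × ℝ × ℝ) :
    quadricDiscr (t • w) = t ^ 2 * quadricDiscr w := by
  obtain ⟨A, M, C⟩ := w
  simp only [quadricDiscr, Prod.smul_mk, smul_eq_mul]
  ring

lemma exists_pair_quadric_eq_zero {w : ℝ × ℝ × ℝ} (hw : 0 < quadricDiscr w) :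
    ∃ p q : ℂ, 0 < p.im ∧ 0 < q.im ∧ p ≠ q ∧ quadric w p = 0 ∧ quadric w q = 0 := by
  obtain ⟨A, M, C⟩ := w
  simp only [quadricDiscr] at hw
  by_cases hA : A = 0
  · have hM : M ≠ 0 := by rintro rfl; simp [hA] at hw
    refine ⟨⟨C / (2 * M), 1⟩, ⟨C / (2 * M), 2⟩, one_pos, two_pos, by simp, ?_, ?_⟩ <;>
      · simp only [quadric, hA]; field_simp; ring
  · set r := √((M ^ 2 - A * C) / A ^ 2)
    have hr : 0 < r := Real.sqrt_pos.2 (by positivity)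
    have hr2 : A ^ 2 * r ^ 2 = M ^ 2 - A * C := by
      rw [Real.sq_sqrt (by positivity)]; field_simp
    -- the points `c + r i` and `c + r (3 + 4 i) / 5` of the circle of centre `c = M / A`, radius `r`
    refine ⟨⟨M / A, r⟩, ⟨M / A + 3 * r / 5, 4 * r / 5⟩, hr, by positivity,
      fun h => by linarith [congrArg Complex.im h], ?_, ?_⟩
    · simp only [quadric, Complex.normSq_mk]
      field_simp
      linear_combination hr2
    · simp only [quadric, Complex.normSq_mk]
      field_simp
      linear_combination 25 * hr2

lemma normSq_ne_normSq_of_re_eq {p q : ℂ} (hp : 0 < p.im) (hq : 0 < q.im) (hpq : p ≠ q)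
    (hre : p.re = q.re) : normSq p ≠ normSq q := by
  intro h
  refine hpq (Complex.ext hre ?_)
  rw [Complex.normSq_apply, Complex.normSq_apply, hre] at h
  nlinarith

/-- The vector on the right is the cross product of `(|p|², -2 Re p, 1)` and
`(|q|², -2 Re q, 1)`. -/
lemma eq_smul_of_quadric_eq_zero {w : ℝ × ℝ × ℝ} {p q : ℂ} (hp : 0 < p.im) (hq : 0 < q.im)
    (hpq : p ≠ q) (hwp : quadric w p = 0) (hwq : quadric w q = 0) :
    ∃ s : ℝ, w = s • (2 * (p.re - q.re), normSq p - normSq q,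
      2 * (q.re * normSq p - p.re * normSq q)) := by
  obtain ⟨A, M, C⟩ := w
  simp only [quadric] at hwp hwq
  simp only [Prod.smul_mk, smul_eq_mul, Prod.mk.injEq]
  by_cases hre : p.re = q.re
  · have hn := sub_ne_zero.2 (normSq_ne_normSq_of_re_eq hp hq hpq hre)
    have hA : A = 0 := by
      have : A * (normSq p - normSq q) = 0 := by rw [← hre] at hwq; linear_combination hwp - hwq
      simpa [hn] using this
    refine ⟨M / (normSq p - normSq q), by simp [hA, hre], by field_simp, ?_⟩
    rw [hA] at hwp
    field_simp
    linear_combination (normSq p - normSq q) * hwp + 2 * normSq p * M * hre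
  · have hx := sub_ne_zero.2 hre
    refine ⟨A / (2 * (p.re - q.re)), by field_simp, ?_, ?_⟩
    · field_simp
      linear_combination hwq - hwp
    · field_simp
      linear_combination p.re * hwq - q.re * hwp

theorem exists_eq_smul_of_quadric_zeros_subset {w w' : ℝ × ℝ × ℝ} (hw : 0 < quadricDiscr w)
    (hw' : w' ≠ 0) (h : ∀ z : ℂ, 0 < z.im → quadric w z = 0 → quadric w' z = 0) :
    ∃ t : ℝ, w = t • w' := by
  obtain ⟨p, q, hp, hq, hpq, hwp, hwq⟩ := exists_pair_quadric_eq_zero hw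
  obtain ⟨s, hs⟩ := eq_smul_of_quadric_eq_zero hp hq hpq hwp hwq
  obtain ⟨s', hs'⟩ := eq_smul_of_quadric_eq_zero hp hq hpq (h p hp hwp) (h q hq hwq)
  have hs'0 : s' ≠ 0 := by rintro rfl; exact hw' (by simpa using hs')
  exact ⟨s / s', by rw [hs, hs', smul_smul, div_mul_cancel₀ _ hs'0]⟩

lemma dist_eq_dist_iff (p q r s : ℍ) :
    dist p q = dist r s ↔ normSq (p - q) * (r.im * s.im) = normSq (r - s) * (p.im * q.im) := by
  have hp := p.im_pos; have hq := q.im_pos; have hr := r.im_pos; have hs := s.im_pos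
  rw [← Real.cosh_injOn.eq_iff (Set.mem_Ici.2 dist_nonneg) (Set.mem_Ici.2 dist_nonneg),
    cosh_dist, cosh_dist, Complex.dist_eq, Complex.dist_eq, Complex.sq_norm, Complex.sq_norm,
    add_right_inj, div_eq_div_iff (by positivity) (by positivity)]
  constructor <;> intro h <;> linarith

def bisectorCoeffs (p q : ℍ) : ℝ × ℝ × ℝ :=
  (q.im - p.im, p.re * q.im - q.re * p.im, q.im * normSq p - p.im * normSq q)

lemma quadric_bisectorCoeffs (p q : ℍ) (z : ℂ) :
    quadric (bisectorCoeffs p q) z = q.im * normSq (z - p) - p.im * normSq (z - q) := by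
  simp only [quadric, bisectorCoeffs, Complex.normSq_apply, Complex.sub_re, Complex.sub_im,
    coe_re, coe_im]
  ring

lemma quadricDiscr_bisectorCoeffs (p q : ℍ) :
    quadricDiscr (bisectorCoeffs p q) = p.im * q.im * normSq (p - q) := by
  simp only [quadricDiscr, bisectorCoeffs, Complex.normSq_apply, Complex.sub_re, Complex.sub_im,
    coe_re, coe_im]
  ring

lemma quadricDiscr_bisectorCoeffs_pos {p q : ℍ} (hpq : p ≠ q) :
    0 < quadricDiscr (bisectorCoeffs p q) := by
  rw [quadricDiscr_bisectorCoeffs]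
  have := Complex.normSq_pos.2 (sub_ne_zero.2 (UpperHalfPlane.ext_iff.not.1 hpq))
  have := p.im_pos; have := q.im_pos
  positivity

lemma dist_eq_dist_iff_quadric_eq_zero (z p q : ℍ) :
    dist z p = dist z q ↔ quadric (bisectorCoeffs p q) z = 0 := by
  rw [dist_eq_dist_iff, quadric_bisectorCoeffs, sub_eq_zero]
  exact ⟨fun h => mul_left_cancel₀ z.im_pos.ne' (by linear_combination h),
    fun h => by linear_combination z.im * h⟩

end UpperHalfPlane

/-- If the perpendicular bisector of the pair `(a, a')` coincides with the perpendicular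
bisector of the pair `(b, b')` in ℍ, then `dist a b = dist a' b'`. -/
theorem dist_eq_of_bisector_eq (a a' b b' : ℍ) (ha : a ≠ a') (hb : b ≠ b')
    (h : {x : ℍ | dist x a = dist x a'} = {x : ℍ | dist x b = dist x b'}) :
    dist a b = dist a' b' := by
  have hDa := quadricDiscr_bisectorCoeffs_pos ha
  have hDb := quadricDiscr_bisectorCoeffs_pos hb
  obtain ⟨t, ht⟩ : ∃ t : ℝ, bisectorCoeffs a a' = t • bisectorCoeffs b b' := by
    refine exists_eq_smul_of_quadric_zeros_subset hDa
      (fun h0 => by simp [h0, quadricDiscr] at hDb) fun z hz hza => ?_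
    have hz := Set.ext_iff.1 h ⟨z, hz⟩
    simp only [Set.mem_ofPred_eq, dist_eq_dist_iff_quadric_eq_zero] at hz
    exact hz.1 hza
  have hD := congrArg quadricDiscr ht
  have hb' := congrArg (quadric · b) ht
  have ha' := congrArg (quadric · a') ht
  simp only [quadricDiscr_smul, quadric_smul] at hD hb' ha'
  have ht0 : t ≠ 0 := by rintro rfl; simp [hD] at hDa
  rw [quadricDiscr_bisectorCoeffs, quadricDiscr_bisectorCoeffs] at hD
  simp only [quadric_bisectorCoeffs, sub_self, map_zero] at hb' ha'
  rw [dist_eq_dist_iff]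
  apply mul_left_cancel₀ ht0
  simp only [Complex.normSq_apply, Complex.sub_re, Complex.sub_im, coe_re, coe_im] at hD hb' ha' ⊢
  linear_combination t * b'.im * hb' - a.im * ha' + hD
end

section
/- Let Γ be a subgroup of SL(2,ℝ), let z₀, z₁ ∈ ℍ, and let γ₀, γ₁ ∈ Γ with γ₀⁻¹•z₀ ≠ z₀ and γ₁⁻¹•z₁ ≠ z₁. Suppose the perpendicular bisector of the pair (z₀, γ₀⁻¹•z₀) equals the perpendicular bisector of the pair (z₁, γ₁⁻¹•z₁) as subsets of ℍ, and that γ₁•(γ₀⁻¹•z₀) ≠ z₀. Then dist(γ₁•(γ₀⁻¹•z₀), z₁) = dist(z₀, z₁), and consequently z₁ does not lie in the topological interior of the Dirichlet set D(Γ, z₀). (This is the key step showing that a domain which is a Dirichlet domain for two centers has its sides identified the same way for each center.) -/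
/-!
Equality of the two bisectors makes the quadratic forms cutting them out proportional: a geodesic
of `ℍ` is the zero set of `A |x|² + B Re x + C`, and is determined by two of its points. Comparing
discriminants fixes the square of the factor, and evaluating the proportionality at `γ₀⁻¹ z₀` and
`z₁` gives `dist (γ₀⁻¹ z₀) (γ₁⁻¹ z₁) = dist z₀ z₁` (geometrically, reflection in the common bisector
swaps both pairs). Hence `z₁` lies on the bisector of `z₀` and `γ₁ γ₀⁻¹ z₀`, which bounds a closed
half-plane containing the Dirichlet set; the form defining that half-plane has nonzero gradient in
`ℍ`, so it has no local maximum there and `z₁` is not interior.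
-/

open UpperHalfPlane Matrix Complex
open scoped MatrixGroups

/-- The Dirichlet set of a subgroup `Γ ≤ SL(2,ℝ)` centered at `z₀ ∈ ℍ`. -/
def dirichletSet (Γ : Subgroup SL(2, ℝ)) (z₀ : ℍ) : Set ℍ :=
  {x : ℍ | ∀ γ ∈ Γ, dist x z₀ ≤ dist x (γ • z₀)}

theorem ne_zero_or_ne_zero_of_discrim_pos {R : Type*} [Ring R] [Preorder R] {A B C : R}
    (h : 0 < discrim A B C) : A ≠ 0 ∨ B ≠ 0 := by
  by_contra! hAB
  obtain ⟨rfl, rfl⟩ := hAB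
  simp [discrim] at h

namespace UpperHalfPlane

theorem dist_le_dist_iff_normSq (x y z w : ℍ) :
    dist x y ≤ dist z w ↔
      normSq (x - y : ℂ) * (z.im * w.im) ≤ normSq (z - w : ℂ) * (x.im * y.im) := by
  rw [← Real.cosh_strictMonoOn.le_iff_le dist_nonneg dist_nonneg, cosh_dist, cosh_dist,
    add_le_add_iff_left, div_le_div_iff₀ (by positivity) (by positivity), Complex.dist_eq,
    Complex.dist_eq, Complex.sq_norm, Complex.sq_norm]
  constructor <;> intro h <;> linarith

theorem dist_eq_dist_iff_normSq (x y z w : ℍ) :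
    dist x y = dist z w ↔
      normSq (x - y : ℂ) * (z.im * w.im) = normSq (z - w : ℂ) * (x.im * y.im) := by
  rw [le_antisymm_iff, le_antisymm_iff, dist_le_dist_iff_normSq, dist_le_dist_iff_normSq]

theorem eq_of_re_eq_of_normSq_eq {x y : ℍ} (hre : x.re = y.re)
    (hnormSq : normSq (x : ℂ) = normSq y) : x = y := by
  have him : x.im * x.im = y.im * y.im := by
    simp only [normSq_apply, coe_re, coe_im, hre] at hnormSq
    linarith
  exact UpperHalfPlane.ext (Complex.ext hre ((mul_self_inj x.im_pos.le y.im_pos.le).1 him))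

/-- The zero set in `ℍ` of `A |x|² + B Re x + C` is a geodesic when `0 < discrim A B C`. -/
def geodesicForm (A B C : ℝ) (x : ℂ) : ℝ := A * normSq x + B * x.re + C

theorem exists_ne_geodesicForm_eq_zero {A B C : ℝ} (hd : 0 < discrim A B C) :
    ∃ x y : ℍ, x ≠ y ∧ geodesicForm A B C x = 0 ∧ geodesicForm A B C y = 0 := by
  rcases eq_or_ne A 0 with rfl | hA
  · have hB : B ≠ 0 := by rintro rfl; simp [discrim] at hd
    refine ⟨mk ⟨-C / B, 1⟩ one_pos, mk ⟨-C / B, 2⟩ two_pos, fun h => ?_, ?_, ?_⟩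
    · simpa using congrArg UpperHalfPlane.im h
    all_goals simp only [geodesicForm]; field_simp; ring
  · -- the top of the circle of center `-B / (2A)` and radius `ρ`, and a point below it
    set ρ := √(discrim A B C / (4 * A ^ 2))
    have hρ : 0 < ρ := Real.sqrt_pos.2 (by positivity)
    have hρsq : 4 * A ^ 2 * ρ ^ 2 = B ^ 2 - 4 * A * C := by
      rw [Real.sq_sqrt (by positivity), discrim]; field_simp
    refine ⟨mk ⟨-B / (2 * A), ρ⟩ hρ, mk ⟨-B / (2 * A) + 3 * ρ / 5, 4 * ρ / 5⟩ (by positivity),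
      fun h => ?_, ?_, ?_⟩
    · have := congrArg UpperHalfPlane.im h
      simp only [im] at this
      linarith
    · simp only [geodesicForm, normSq_mk]
      field_simp
      linear_combination hρsq
    · simp only [geodesicForm, normSq_mk]
      field_simp
      linear_combination 25 * hρsq

theorem exists_geodesicForm_eq_mul {A B C A' B' C' : ℝ} (hd : 0 < discrim A B C)
    (h : ∀ x : ℍ, geodesicForm A B C x = 0 → geodesicForm A' B' C' x = 0) :
    ∃ l : ℝ, (∀ x, geodesicForm A' B' C' x = l * geodesicForm A B C x) ∧
      discrim A' B' C' = l ^ 2 * discrim A B C := by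
  obtain ⟨x, y, hxy, hx, hy⟩ := exists_ne_geodesicForm_eq_zero hd
  have hx' := h x hx
  have hy' := h y hy
  simp only [geodesicForm, coe_re] at hx hy hx' hy'
  have hdet : A' * B = A * B' := by
    -- both `(A, B)` and `(A', B')` are orthogonal to `(|x|² - |y|², Re x - Re y) ≠ 0`
    by_contra hne
    have hdet : A' * B - A * B' ≠ 0 := sub_ne_zero.2 hne
    refine hxy (eq_of_re_eq_of_normSq_eq ?_ ?_)
    · refine sub_eq_zero.1 ((mul_right_inj' hdet).1 ?_)
      linear_combination A' * (hx - hy) - A * (hx' - hy')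
    · refine sub_eq_zero.1 ((mul_right_inj' hdet).1 ?_)
      linear_combination B * (hx' - hy') - B' * (hx - hy)
  obtain ⟨l, hlA, hlB⟩ : ∃ l, A' = l * A ∧ B' = l * B := by
    rcases ne_zero_or_ne_zero_of_discrim_pos hd with hA | hB
    · exact ⟨A' / A, by field_simp, by field_simp; linear_combination -hdet⟩
    · exact ⟨B' / B, by field_simp; linear_combination hdet, by field_simp⟩
  have hlC : C' = l * C := by
    rw [hlA, hlB] at hx'
    linear_combination hx' - l * hx
  refine ⟨l, fun z => ?_, ?_⟩
  · simp only [geodesicForm, hlA, hlB, hlC]; ring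
  · simp only [discrim, hlA, hlB, hlC]; ring

theorem not_isLocalMax_geodesicForm {A B C : ℝ} (hAB : A ≠ 0 ∨ B ≠ 0) {z : ℂ} (hz : 0 < z.im) :
    ¬ IsLocalMax (geodesicForm A B C) z := by
  intro hmax
  -- `g` is the gradient of the form at `z`
  set g : ℂ := ⟨2 * A * z.re + B, 2 * A * z.im⟩
  have hg : 0 < normSq g := by
    rw [normSq_mk]
    rcases eq_or_ne A 0 with rfl | hA
    · simpa using hAB
    · exact add_pos_of_nonneg_of_pos (mul_self_nonneg _) (mul_self_pos.2 (by positivity))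
  have hline : (fun t : ℝ => geodesicForm A B C (z + t * g)) =
      fun t => geodesicForm A B C z + normSq g * t + A * normSq g * t ^ 2 := by
    funext t
    simp only [geodesicForm, g, normSq_apply, add_re, add_im, mul_re, mul_im, ofReal_re,
      ofReal_im]
    ring
  have hderiv : HasDerivAt (fun t : ℝ => geodesicForm A B C (z + t * g)) (normSq g) 0 := by
    rw [hline]
    simpa using ((hasDerivAt_id' (x := (0 : ℝ))).const_mul (normSq g)).const_add
      (geodesicForm A B C z) |>.fun_add ((hasDerivAt_pow 2 (0 : ℝ)).const_mul (A * normSq g))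
  have hmax_line : IsLocalMax (fun t : ℝ => geodesicForm A B C (z + t * g)) 0 :=
    IsLocalMax.comp_continuous (f := geodesicForm A B C) (g := fun t : ℝ => z + t * g) (b := 0)
      (by simpa using hmax)
      (continuous_const.add (continuous_ofReal.mul continuous_const)).continuousAt
  exact hg.ne' (hmax_line.hasDerivAt_eq_zero hderiv)

def bisectorForm (p q : ℍ) : ℂ → ℝ :=
  geodesicForm (q.im - p.im) (2 * (q.re * p.im - p.re * q.im))
    (normSq (p : ℂ) * q.im - normSq (q : ℂ) * p.im)

theorem bisectorForm_apply (p q : ℍ) (x : ℂ) :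
    bisectorForm p q x = normSq (x - p) * q.im - normSq (x - q) * p.im := by
  simp only [bisectorForm, geodesicForm, normSq_apply, sub_re, sub_im, coe_re, coe_im]
  ring

theorem discrim_bisectorForm (p q : ℍ) :
    discrim (q.im - p.im) (2 * (q.re * p.im - p.re * q.im))
      (normSq (p : ℂ) * q.im - normSq (q : ℂ) * p.im) =
      4 * (p.im * q.im * normSq (p - q : ℂ)) := by
  simp only [discrim, normSq_apply, sub_re, sub_im, coe_re, coe_im]
  ring

theorem normSq_coe_sub_pos {p q : ℍ} (hpq : p ≠ q) : 0 < normSq (p - q : ℂ) :=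
  Complex.normSq_pos.2 (sub_ne_zero.2 fun h => hpq (UpperHalfPlane.ext h))

theorem discrim_bisectorForm_pos {p q : ℍ} (hpq : p ≠ q) :
    0 < discrim (q.im - p.im) (2 * (q.re * p.im - p.re * q.im))
      (normSq (p : ℂ) * q.im - normSq (q : ℂ) * p.im) := by
  rw [discrim_bisectorForm]
  have := normSq_coe_sub_pos hpq
  have := p.im_pos
  have := q.im_pos
  positivity

theorem normSq_sub_mul_sub_eq_im_mul_bisectorForm (p q x : ℍ) :
    normSq (x - p : ℂ) * (x.im * q.im) - normSq (x - q : ℂ) * (x.im * p.im) =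
      x.im * bisectorForm p q x := by
  rw [bisectorForm_apply]; ring

theorem dist_le_dist_iff_bisectorForm_nonpos (p q x : ℍ) :
    dist x p ≤ dist x q ↔ bisectorForm p q x ≤ 0 := by
  rw [dist_le_dist_iff_normSq, ← sub_nonpos, normSq_sub_mul_sub_eq_im_mul_bisectorForm]
  simpa using mul_le_mul_iff_of_pos_left (c := 0) x.im_pos

theorem dist_eq_dist_iff_bisectorForm_eq_zero (p q x : ℍ) :
    dist x p = dist x q ↔ bisectorForm p q x = 0 := by
  rw [dist_eq_dist_iff_normSq, ← sub_eq_zero, normSq_sub_mul_sub_eq_im_mul_bisectorForm]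
  exact mul_eq_zero_iff_left x.im_pos.ne'

theorem exists_bisectorForm_eq_mul {p q c d : ℍ} (hpq : p ≠ q)
    (h : ∀ x : ℍ, dist x p = dist x q → dist x c = dist x d) :
    ∃ l : ℝ, (∀ x, bisectorForm c d x = l * bisectorForm p q x) ∧
      c.im * d.im * normSq (c - d : ℂ) = l ^ 2 * (p.im * q.im * normSq (p - q : ℂ)) := by
  have h' : ∀ x : ℍ, bisectorForm p q x = 0 → bisectorForm c d x = 0 := by
    simpa only [dist_eq_dist_iff_bisectorForm_eq_zero] using h
  obtain ⟨l, hl, hdisc⟩ := exists_geodesicForm_eq_mul (discrim_bisectorForm_pos hpq) h'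
  rw [discrim_bisectorForm, discrim_bisectorForm] at hdisc
  exact ⟨l, hl, by linarith⟩

theorem dist_eq_dist_of_bisector_subset {p q c d : ℍ} (hpq : p ≠ q) (hcd : c ≠ d)
    (h : ∀ x : ℍ, dist x p = dist x q → dist x c = dist x d) : dist q d = dist p c := by
  obtain ⟨l, hF, hdisc⟩ := exists_bisectorForm_eq_mul hpq h
  have hl : l ≠ 0 := by
    rintro rfl
    have := normSq_coe_sub_pos hcd
    have := c.im_pos
    have := d.im_pos
    have : c.im * d.im * normSq (c - d : ℂ) ≠ 0 := by positivity
    exact this (by simpa using hdisc)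
  have hq := hF q
  have hc := hF c
  rw [bisectorForm_apply, bisectorForm_apply] at hq hc
  rw [dist_eq_dist_iff_normSq]
  refine mul_left_cancel₀ hl ?_
  simp only [normSq_apply, sub_re, sub_im, coe_re, coe_im] at hq hc hdisc ⊢
  -- `l * bisectorForm p q c` is eliminated through `hc`, and the resulting `l ^ 2` through `hdisc`
  linear_combination (-l * p.im) * hq + d.im * hc + hdisc

theorem notMem_interior_setOf_dist_le {p q c : ℍ} (hpq : p ≠ q) (hc : dist c p = dist c q) :
    c ∉ interior {x : ℍ | dist x p ≤ dist x q} := by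
  have hset : {x : ℍ | dist x p ≤ dist x q} = (↑) ⁻¹' {z : ℂ | bisectorForm p q z ≤ 0} := by
    ext x
    exact dist_le_dist_iff_bisectorForm_nonpos p q x
  rw [hset, ← isOpenEmbedding_coe.isOpenMap.preimage_interior_eq_interior_preimage continuous_coe]
  intro hint
  have hmax : IsLocalMax (bisectorForm p q) c := by
    filter_upwards [mem_interior_iff_mem_nhds.1 hint] with z hz
    rwa [(dist_eq_dist_iff_bisectorForm_eq_zero p q c).1 hc]
  exact not_isLocalMax_geodesicForm
    (ne_zero_or_ne_zero_of_discrim_pos (discrim_bisectorForm_pos hpq)) c.im_pos hmax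

end UpperHalfPlane

/-- If a side of `P` is simultaneously the bisector of `(z₀, γ₀⁻¹•z₀)` and of
`(z₁, γ₁⁻¹•z₁)`, and `γ₁•(γ₀⁻¹•z₀) ≠ z₀`, then `γ₁•(γ₀⁻¹•z₀)` lies at distance
`dist z₀ z₁` from `z₁`, whence `z₁` is not interior to the Dirichlet set `D(Γ, z₀)`. -/
theorem not_mem_interior_dirichletSet_of_bisectors_eq (Γ : Subgroup SL(2, ℝ))
    (z₀ z₁ : ℍ) (γ₀ γ₁ : SL(2, ℝ)) (h₀ : γ₀ ∈ Γ) (h₁ : γ₁ ∈ Γ)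
    (hne₀ : γ₀⁻¹ • z₀ ≠ z₀) (hne₁ : γ₁⁻¹ • z₁ ≠ z₁)
    (hbis : {x : ℍ | dist x z₀ = dist x (γ₀⁻¹ • z₀)} =
      {x : ℍ | dist x z₁ = dist x (γ₁⁻¹ • z₁)})
    (hne : γ₁ • (γ₀⁻¹ • z₀) ≠ z₀) :
    dist (γ₁ • (γ₀⁻¹ • z₀)) z₁ = dist z₀ z₁ ∧
      z₁ ∉ interior (dirichletSet Γ z₀) := by
  have hdist : dist (γ₀⁻¹ • z₀) (γ₁⁻¹ • z₁) = dist z₀ z₁ :=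
    dist_eq_dist_of_bisector_subset hne₀.symm hne₁.symm fun x => (Set.ext_iff.1 hbis x).1
  have hside : dist (γ₁ • γ₀⁻¹ • z₀) z₁ = dist z₀ z₁ := by
    rw [← hdist, ← dist_smul γ₁ (γ₀⁻¹ • z₀), smul_inv_smul]
  refine ⟨hside, fun hint => ?_⟩
  have hsub : dirichletSet Γ z₀ ⊆ {x | dist x z₀ ≤ dist x (γ₁ • γ₀⁻¹ • z₀)} := fun x hx => by
    simpa [mul_smul] using hx (γ₁ * γ₀⁻¹) (mul_mem h₁ (inv_mem h₀))
  exact notMem_interior_setOf_dist_le hne.symm (by rw [dist_comm z₁ z₀, ← hside, dist_comm])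
    (interior_mono hsub hint)
end

section
/- Let Γ be a subgroup of SL(2,ℝ) and let z₀ ≠ z₁ be points of ℍ with Re(z₀) = Re(z₁) = r. Suppose the Dirichlet sets coincide: D(Γ,z₀) = D(Γ,z₁) =: P. Then for every γ ∈ Γ and every v ∈ P with γ•v ∈ P, either γ•v = v, or Re(γ•v) = 2r − Re(v) and Im(γ•v) = Im(v); that is, each boundary point of a Double Dirichlet domain is identified with its reflection in the vertical line through the two centers. -/
/-!
Both `v` and `γ • v` lie in the Dirichlet set of `z`, and `γ` is an isometry, so
`d(v, z) ≤ d(v, γ⁻¹ • z) = d(γ • v, z) ≤ d(γ • v, γ • z) = d(v, z)`: the points `v` and `γ • v`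
are equidistant from each center. By `cosh d(w, z) = ((Re w - Re z)² + Im w² + Im z²) / (2 Im w Im z)`,
equidistance from `z` with `Re z = r` is an equation affine in `(Im z)²`; holding for two distinct
values of `Im z`, it forces `Im (γ • v) = Im v` and `(Re (γ • v) - r)² = (Re v - r)²`.
-/

open UpperHalfPlane Matrix Complex
open scoped MatrixGroups

namespace UpperHalfPlane

theorem dist_eq_dist_iff_s8 (v w z : ℍ) :
    dist w z = dist v z ↔
      v.im * ((w.re - z.re) ^ 2 + w.im ^ 2 + z.im ^ 2) =
        w.im * ((v.re - z.re) ^ 2 + v.im ^ 2 + z.im ^ 2) := by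
  have hv := v.im_pos
  have hw := w.im_pos
  have hz := z.im_pos
  rw [← Real.cosh_injOn.eq_iff dist_nonneg dist_nonneg, cosh_dist', cosh_dist',
    div_eq_div_iff (by positivity) (by positivity)]
  constructor <;> intro h <;> nlinarith [mul_pos hz (mul_pos hv hw)]

theorem eq_or_reflection_of_dist_eq_dist {z₀ z₁ v w : ℍ} {r : ℝ} (hne : z₀ ≠ z₁)
    (h₀ : z₀.re = r) (h₁ : z₁.re = r)
    (hd₀ : dist w z₀ = dist v z₀) (hd₁ : dist w z₁ = dist v z₁) :
    w = v ∨ (w.re = 2 * r - v.re ∧ w.im = v.im) := by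
  have him_ne : z₀.im ^ 2 ≠ z₁.im ^ 2 := by
    intro h
    refine hne (ext_re_im (h₀.trans h₁.symm) ?_)
    exact (pow_left_inj₀ z₀.im_pos.le z₁.im_pos.le two_ne_zero).1 h
  have E₀ := (dist_eq_dist_iff_s8 v w z₀).1 hd₀
  have E₁ := (dist_eq_dist_iff_s8 v w z₁).1 hd₁
  rw [h₀] at E₀
  rw [h₁] at E₁
  have him : w.im = v.im := by
    have : (v.im - w.im) * (z₀.im ^ 2 - z₁.im ^ 2) = 0 := by linear_combination E₀ - E₁
    linarith [(mul_eq_zero.1 this).resolve_right (sub_ne_zero.2 him_ne)]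
  have hre : (w.re - v.re) * (w.re + v.re - 2 * r) = 0 := by
    have : v.im * ((w.re - v.re) * (w.re + v.re - 2 * r)) = 0 := by
      rw [him] at E₀; linear_combination E₀
    exact (mul_eq_zero.1 this).resolve_left v.im_pos.ne'
  rcases mul_eq_zero.1 hre with h | h
  · exact .inl (ext_re_im (by linarith) him)
  · exact .inr ⟨by linarith, him⟩

end UpperHalfPlane

theorem dist_smul_eq_of_mem_dirichletSet {Γ : Subgroup SL(2, ℝ)} {z v : ℍ} {γ : SL(2, ℝ)}
    (hγ : γ ∈ Γ) (hv : v ∈ dirichletSet Γ z) (hγv : γ • v ∈ dirichletSet Γ z) :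
    dist (γ • v) z = dist v z := by
  refine le_antisymm ?_ ?_
  · simpa only [dist_smul] using hγv γ hγ
  · simpa only [← dist_smul γ v, smul_inv_smul] using hv γ⁻¹ (inv_mem hγ)

/-- In a Double Dirichlet domain (a common Dirichlet set for two distinct centers on the
vertical line `{Re(z) = r}`), every point of the domain is identified by each `γ ∈ Γ`
either with itself or with its reflection in that vertical line. -/
theorem double_dirichlet_side_pairing_reflection (Γ : Subgroup SL(2, ℝ))
    (z₀ z₁ : ℍ) (r : ℝ) (hne : z₀ ≠ z₁) (h₀ : z₀.re = r) (h₁ : z₁.re = r)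
    (P : Set ℍ) (hP₀ : P = dirichletSet Γ z₀) (hP₁ : P = dirichletSet Γ z₁) :
    ∀ γ ∈ Γ, ∀ v ∈ P, γ • v ∈ P →
      γ • v = v ∨ ((γ • v).re = 2 * r - v.re ∧ (γ • v).im = v.im) := by
  intro γ hγ v hv hγv
  exact eq_or_reflection_of_dist_eq_dist hne h₀ h₁
    (dist_smul_eq_of_mem_dirichletSet hγ (hP₀ ▸ hv) (hP₀ ▸ hγv))
    (dist_smul_eq_of_mem_dirichletSet hγ (hP₁ ▸ hv) (hP₁ ▸ hγv))
end

section
/- Let Γ be a discrete subgroup of SL(2,ℝ) containing T = [[1,1],[0,1]], let x₀ ∈ ℝ, and let F(Γ,x₀) be the Ford set of Γ over the strip [x₀, x₀+1]. If F(Γ,x₀) equals the Dirichlet set D(Γ,z₀) for some z₀ ∈ ℍ (i.e. Γ admits a DF domain), then Re(z₀) = x₀ + 1/2; that is, the Dirichlet center lies on the vertical bisecting line of the strip. -/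
/-!
Shimizu's lemma: in a discrete subgroup of `SL(2,ℝ)` containing `T`, every element with
lower-left entry `c ≠ 0` has `|c| ≥ 1`. Otherwise the iterated conjugates `g ↦ g T g⁻¹` have
lower-left entries of absolute value `|c| ^ 2 ^ n`, converge to `T`, and never equal it.
Hence every point of the strip `[x₀, x₀ + 1]` with imaginary part `≥ 1` lies in the Ford set,
in particular `x₀ + i` and `x₀ + 1 + i`. Since `T` and `T⁻¹` lie in `Γ`, each point of the
Dirichlet set is within horizontal distance `1/2` of `Re z₀`; for these two points this
forces `Re z₀ = x₀ + 1/2`.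
-/

open UpperHalfPlane Matrix Complex
open scoped MatrixGroups

/-- The topology on `SL(2,ℝ)` induced from the space of 2×2 real matrices. -/
def slTopology : TopologicalSpace SL(2, ℝ) :=
  TopologicalSpace.induced (fun g => (g : Matrix (Fin 2) (Fin 2) ℝ)) inferInstance

/-- A subgroup of `SL(2,ℝ)` is discrete if it carries the discrete topology as a
subspace of `SL(2,ℝ)`. -/
def IsDiscreteSubgroup (Γ : Subgroup SL(2, ℝ)) : Prop :=
  @DiscreteTopology Γ (TopologicalSpace.induced (Subtype.val : Γ → SL(2, ℝ)) slTopology)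

/-- The Ford set of a subgroup `Γ ≤ SL(2,ℝ)` over the vertical strip `[x₀, x₀+1]`:
the points of the strip lying on or exterior to every isometric circle of `Γ`. -/
def fordSet (Γ : Subgroup SL(2, ℝ)) (x₀ : ℝ) : Set ℍ :=
  {z : ℍ | x₀ ≤ z.re ∧ z.re ≤ x₀ + 1 ∧
    ∀ g ∈ Γ, g 1 0 ≠ 0 → 1 ≤ ‖(g 1 0 : ℂ) * (z : ℂ) + (g 1 1 : ℂ)‖}

/-- The parabolic translation `T = [[1,1],[0,1]]` in `SL(2,ℝ)`. -/
def T : SL(2, ℝ) :=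
  ⟨!![1, 1; 0, 1], by norm_num [Matrix.det_fin_two_of]⟩

open Filter Topology

lemma IsDiscreteSubgroup.eventually_eq_of_tendsto {Γ : Subgroup SL(2, ℝ)}
    (hΓ : IsDiscreteSubgroup Γ) {α : Type*} {l : Filter α} {s : α → SL(2, ℝ)}
    (hs : ∀ n, s n ∈ Γ) {g : SL(2, ℝ)} (hg : g ∈ Γ)
    (h : Tendsto (fun n => (s n : Matrix (Fin 2) (Fin 2) ℝ)) l (𝓝 g)) :
    ∀ᶠ n in l, s n = g := by
  let τ : TopologicalSpace Γ := .induced Subtype.val slTopology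
  have hlim : Tendsto (fun n => (⟨s n, hs n⟩ : Γ)) l (@nhds Γ τ ⟨g, hg⟩) := by
    rw [nhds_induced, slTopology, nhds_induced, tendsto_comap_iff, tendsto_comap_iff]
    exact h
  rw [@nhds_discrete Γ τ hΓ, tendsto_pure] at hlim
  exact hlim.mono fun n hn => congrArg Subtype.val hn

lemma coe_mul_T_mul_inv (g : SL(2, ℝ)) :
    ((g * T * g⁻¹ : SL(2, ℝ)) : Matrix (Fin 2) (Fin 2) ℝ) =
      !![1 - g 0 0 * g 1 0, g 0 0 ^ 2; -g 1 0 ^ 2, 1 + g 0 0 * g 1 0] := by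
  have hdet : g 0 0 * g 1 1 - g 0 1 * g 1 0 = 1 := by
    rw [← Matrix.det_fin_two]; exact g.det_coe
  ext i j
  rw [Matrix.SpecialLinearGroup.coe_mul, Matrix.SpecialLinearGroup.coe_mul,
    Matrix.SpecialLinearGroup.coe_inv, Matrix.adjugate_fin_two]
  fin_cases i <;> fin_cases j <;> simp [Matrix.mul_apply, Fin.sum_univ_two, T] <;>
    linarith

lemma T_smul (z : ℍ) : T • z = (1 : ℝ) +ᵥ z := by
  apply UpperHalfPlane.ext
  rw [UpperHalfPlane.coe_vadd, UpperHalfPlane.specialLinearGroup_apply]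
  simp [T, add_comm]

lemma T_inv_smul (z : ℍ) : T⁻¹ • z = (-1 : ℝ) +ᵥ z := by
  rw [inv_smul_eq_iff, T_smul, vadd_vadd, add_neg_cancel, zero_vadd]

namespace UpperHalfPlane

lemma dist_le_dist_iff_of_im_eq {x z w : ℍ} (h : z.im = w.im) :
    dist x z ≤ dist x w ↔ dist (x : ℂ) z ≤ dist (x : ℂ) w := by
  calc dist x z ≤ dist x w ↔ Real.cosh (dist x z) ≤ Real.cosh (dist x w) := by
        rw [Real.cosh_le_cosh, abs_of_nonneg dist_nonneg, abs_of_nonneg dist_nonneg]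
    _ ↔ dist (x : ℂ) z ≤ dist (x : ℂ) w := by
        rw [cosh_dist, cosh_dist, h, add_le_add_iff_left,
          div_le_div_iff_of_pos_right (by positivity), sq_le_sq₀ dist_nonneg dist_nonneg]

lemma two_mul_re_sub_le_of_dist_le_dist_vadd {x z : ℍ} {t : ℝ}
    (h : dist x z ≤ dist x (t +ᵥ z)) : 2 * t * (x.re - z.re) ≤ t ^ 2 := by
  rw [dist_le_dist_iff_of_im_eq (vadd_im t z).symm, Complex.dist_eq_re_im,
    Complex.dist_eq_re_im, Real.sqrt_le_sqrt_iff (by positivity)] at h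
  simp only [coe_vadd, Complex.add_re, Complex.add_im, Complex.ofReal_re, Complex.ofReal_im,
    coe_re, coe_im] at h
  nlinarith

end UpperHalfPlane

lemma abs_re_sub_le_of_mem_dirichletSet {Γ : Subgroup SL(2, ℝ)} (hT : T ∈ Γ) {z₀ x : ℍ}
    (hx : x ∈ dirichletSet Γ z₀) : |x.re - z₀.re| ≤ 1 / 2 := by
  have h₁ := two_mul_re_sub_le_of_dist_le_dist_vadd (T_smul z₀ ▸ hx T hT)
  have h₂ := two_mul_re_sub_le_of_dist_le_dist_vadd (T_inv_smul z₀ ▸ hx T⁻¹ (inv_mem hT))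
  rw [abs_le]
  constructor <;> linarith

section ConjugationRecursion

variable {a c : ℕ → ℝ}

lemma abs_eq_pow_two_pow_of_succ_eq_neg_sq (hc : ∀ n, c (n + 1) = -c n ^ 2) (n : ℕ) :
    |c n| = |c 0| ^ 2 ^ n := by
  induction n with
  | zero => simp
  | succ n ih => rw [hc, abs_neg, abs_pow, ih, ← pow_mul, pow_succ]

lemma abs_le_pow_of_succ_eq_neg_sq (hc : ∀ n, c (n + 1) = -c n ^ 2) (hc₀ : |c 0| ≤ 1)
    (n : ℕ) : |c n| ≤ |c 0| ^ n := by
  rw [abs_eq_pow_two_pow_of_succ_eq_neg_sq hc]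
  exact pow_le_pow_of_le_one (abs_nonneg _) hc₀ Nat.lt_two_pow_self.le

lemma tendsto_zero_of_succ_eq_neg_sq (hc : ∀ n, c (n + 1) = -c n ^ 2) (hc₀ : |c 0| < 1) :
    Tendsto c atTop (𝓝 0) :=
  squeeze_zero_norm (abs_le_pow_of_succ_eq_neg_sq hc hc₀.le)
    (tendsto_pow_atTop_nhds_zero_of_lt_one (abs_nonneg _) hc₀)

lemma abs_le_add_of_succ_eq_one_sub_mul (ha : ∀ n, a (n + 1) = 1 - a n * c n)
    (hc : ∀ n, |c n| ≤ 1) (n : ℕ) : |a n| ≤ |a 0| + n := by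
  induction n with
  | zero => simp
  | succ n ih =>
    calc |a (n + 1)| ≤ |1| + |a n| * |c n| := by rw [ha, ← abs_mul]; exact abs_sub _ _
      _ ≤ 1 + |a n| := by rw [abs_one]; gcongr; exact mul_le_of_le_one_right (abs_nonneg _) (hc n)
      _ ≤ |a 0| + (n + 1 : ℕ) := by push_cast; linarith

lemma tendsto_mul_zero_of_succ_eq (ha : ∀ n, a (n + 1) = 1 - a n * c n)
    (hc : ∀ n, c (n + 1) = -c n ^ 2) (hc₀ : |c 0| < 1) :
    Tendsto (fun n => a n * c n) atTop (𝓝 0) := by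
  have hc_pow := abs_le_pow_of_succ_eq_neg_sq hc hc₀.le
  have ha_le := abs_le_add_of_succ_eq_one_sub_mul ha
    fun n => (hc_pow n).trans (pow_le_one₀ (abs_nonneg _) hc₀.le)
  have hbound : Tendsto (fun n : ℕ => (|a 0| + n) * |c 0| ^ n) atTop (𝓝 0) := by
    simpa [add_mul] using
      ((tendsto_pow_atTop_nhds_zero_of_lt_one (abs_nonneg _) hc₀).const_mul |a 0|).add
        (tendsto_self_mul_const_pow_of_lt_one (abs_nonneg _) hc₀)
  refine squeeze_zero_norm (fun n => ?_) hbound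
  rw [norm_mul]
  exact mul_le_mul (ha_le n) (hc_pow n) (norm_nonneg _) (by positivity)

end ConjugationRecursion

theorem IsDiscreteSubgroup.one_le_abs_apply_one_zero {Γ : Subgroup SL(2, ℝ)}
    (hΓ : IsDiscreteSubgroup Γ) (hT : T ∈ Γ) {g : SL(2, ℝ)} (hg : g ∈ Γ) (hc : g 1 0 ≠ 0) :
    1 ≤ |g 1 0| := by
  by_contra! hlt
  set s : ℕ → SL(2, ℝ) := fun n => (fun h => h * T * h⁻¹)^[n] g
  have hs_succ (n : ℕ) : s (n + 1) = s n * T * (s n)⁻¹ := Function.iterate_succ_apply' _ _ _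
  have hs_mem (n : ℕ) : s n ∈ Γ := by
    induction n with
    | zero => exact hg
    | succ n ih => rw [hs_succ]; exact mul_mem (mul_mem ih hT) (inv_mem ih)
  set a : ℕ → ℝ := fun n => s n 0 0
  set c : ℕ → ℝ := fun n => s n 1 0
  have hs_coe (n : ℕ) : (s (n + 1) : Matrix (Fin 2) (Fin 2) ℝ) =
      !![1 - a n * c n, a n ^ 2; -c n ^ 2, 1 + a n * c n] := by
    rw [hs_succ]; exact coe_mul_T_mul_inv (s n)
  have ha_succ (n : ℕ) : a (n + 1) = 1 - a n * c n := by simp [a, hs_coe]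
  have hc_succ (n : ℕ) : c (n + 1) = -c n ^ 2 := by simp [c, hs_coe]
  have hac := tendsto_mul_zero_of_succ_eq ha_succ hc_succ hlt
  have hc_lim := tendsto_zero_of_succ_eq_neg_sq hc_succ hlt
  have ha_lim : Tendsto a atTop (𝓝 1) := by
    rw [← tendsto_add_atTop_iff_nat 1]
    simpa [ha_succ] using tendsto_const_nhds.sub hac
  have hs_lim : Tendsto (fun n => (s (n + 1) : Matrix (Fin 2) (Fin 2) ℝ)) atTop (𝓝 T) := by
    simp only [hs_coe]
    refine tendsto_pi_nhds.2 fun i => tendsto_pi_nhds.2 fun j => ?_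
    fin_cases i <;> fin_cases j
    · simpa [T] using tendsto_const_nhds.sub hac
    · simpa [T] using ha_lim.pow 2
    · simpa [T] using (hc_lim.pow 2).neg
    · simpa [T] using tendsto_const_nhds.add hac
  obtain ⟨n, hn⟩ := (hΓ.eventually_eq_of_tendsto (fun n => hs_mem (n + 1)) hT hs_lim).exists
  have hc_ne : c (n + 1) ≠ 0 := by
    rw [← abs_pos, abs_eq_pow_two_pow_of_succ_eq_neg_sq hc_succ]
    exact pow_pos (abs_pos.2 hc) _
  exact hc_ne (by simp [c, hn, T])

lemma mem_fordSet_of_one_le_im {Γ : Subgroup SL(2, ℝ)} (hΓ : IsDiscreteSubgroup Γ)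
    (hT : T ∈ Γ) {x₀ : ℝ} {z : ℍ} (h₁ : x₀ ≤ z.re) (h₂ : z.re ≤ x₀ + 1) (him : 1 ≤ z.im) :
    z ∈ fordSet Γ x₀ := by
  refine ⟨h₁, h₂, fun g hg hc => ?_⟩
  calc (1 : ℝ) ≤ |g 1 0| * z.im := one_le_mul_of_one_le_of_one_le
        (hΓ.one_le_abs_apply_one_zero hT hg hc) him
    _ = |((g 1 0 : ℂ) * z + (g 1 1 : ℂ)).im| := by simp [abs_mul, abs_of_pos z.im_pos]
    _ ≤ ‖(g 1 0 : ℂ) * z + (g 1 1 : ℂ)‖ := Complex.abs_im_le_norm _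

/-- If a discrete subgroup `Γ ≤ SL(2,ℝ)` containing `T` admits a DF domain, i.e. its
Ford set over the strip `[x₀, x₀+1]` equals its Dirichlet set with center `z₀`, then the
Dirichlet center lies on the vertical bisecting line of the strip. -/
theorem re_center_eq_of_df_domain (Γ : Subgroup SL(2, ℝ))
    (hdisc : IsDiscreteSubgroup Γ) (hT : T ∈ Γ) (x₀ : ℝ) (z₀ : ℍ)
    (h : fordSet Γ x₀ = dirichletSet Γ z₀) :
    z₀.re = x₀ + 1 / 2 := by
  have hstrip (r : ℝ) (h₁ : x₀ ≤ r) (h₂ : r ≤ x₀ + 1) : |r - z₀.re| ≤ 1 / 2 := by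
    have hmem : r +ᵥ UpperHalfPlane.I ∈ dirichletSet Γ z₀ :=
      h ▸ mem_fordSet_of_one_le_im hdisc hT (by simpa) (by simpa) (by simp)
    simpa using abs_re_sub_le_of_mem_dirichletSet hT hmem
  have hleft := abs_le.1 (hstrip x₀ le_rfl (by linarith))
  have hright := abs_le.1 (hstrip (x₀ + 1) (by linarith) le_rfl)
  linarith [hleft.1, hright.2]
end

section
/- Let γ₂ = [[0, −1/√11],[√11, 0]] ∈ SL(2,ℝ). For every natural number n ≥ 1 with n ≠ 11, γ₂ does not normalize the image of Γ₀(n) in SL(2,ℝ): there exists A ∈ Γ₀(n) such that γ₂ · A · γ₂⁻¹ does not lie in the image of Γ₀(n) under the inclusion SL(2,ℤ) → SL(2,ℝ). -/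
/-!
Conjugation by `γ₂` sends `[[a, b], [c, d]]` to `[[d, -c/11], [-11b, a]]`. So if the conjugate of
`A ∈ Γ₀(n)` is again in `Γ₀(n)`, then `11 ∣ c` (integrality) and `n ∣ 11b` (the level condition).
For the single matrix `[[1, 1], [n, n + 1]] ∈ Γ₀(n)` this forces `11 ∣ n` and `n ∣ 11`, i.e. `n = 11`.
-/

open Matrix
open scoped MatrixGroups

/-- The matrix `γ₂ = [[0, −1/√11],[√11, 0]]` in `SL(2,ℝ)`. -/
noncomputable def gamma2 : SL(2, ℝ) :=
  ⟨!![0, -1 / Real.sqrt 11; Real.sqrt 11, 0], by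
    have h : Real.sqrt 11 ≠ 0 := by positivity
    rw [Matrix.det_fin_two_of]
    field_simp
    norm_num⟩

/-- The entrywise embedding `SL(2,ℤ) →* SL(2,ℝ)`. -/
def mapSL : SL(2, ℤ) →* SL(2, ℝ) :=
  Matrix.SpecialLinearGroup.map (Int.castRingHom ℝ)

open CongruenceSubgroup

lemma coe_mapSL_apply (A : SL(2, ℤ)) (i j : Fin 2) :
    (mapSL A : Matrix (Fin 2) (Fin 2) ℝ) i j = A i j := by
  simp [mapSL]

lemma coe_gamma2_mul_mapSL_mul_gamma2_inv (A : SL(2, ℤ)) :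
    ((gamma2 * mapSL A * gamma2⁻¹ : SL(2, ℝ)) : Matrix (Fin 2) (Fin 2) ℝ) =
      !![(A 1 1 : ℝ), -(A 1 0 : ℝ) / 11; -11 * (A 0 1 : ℝ), (A 0 0 : ℝ)] := by
  have hsq : Real.sqrt 11 ^ 2 = 11 := Real.sq_sqrt (by norm_num)
  rw [Matrix.SpecialLinearGroup.coe_mul, Matrix.SpecialLinearGroup.coe_mul,
    Matrix.SpecialLinearGroup.coe_inv, eta_fin_two (mapSL A : Matrix (Fin 2) (Fin 2) ℝ)]
  simp only [gamma2, adjugate_fin_two_of, coe_mapSL_apply]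
  ext i j
  fin_cases i <;> fin_cases j <;> simp [Matrix.mul_apply, Fin.sum_univ_two] <;> field_simp
    <;> rw [hsq] <;> ring

lemma dvd_of_gamma2_conj_mem_map_Gamma0 {n : ℕ} {A : SL(2, ℤ)}
    (h : gamma2 * mapSL A * gamma2⁻¹ ∈ (Gamma0 n).map mapSL) :
    11 ∣ A 1 0 ∧ (n : ℤ) ∣ 11 * A 0 1 := by
  obtain ⟨B, hB, hBA⟩ := h
  have hentry (i j : Fin 2) := congrFun₂ (congrArg Subtype.val hBA) i j
  have h01 : B 0 1 * 11 = -A 1 0 := by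
    have := hentry 0 1
    simp only [coe_mapSL_apply, coe_gamma2_mul_mapSL_mul_gamma2_inv, of_apply, cons_val',
      cons_val_zero, cons_val_one, cons_val_fin_one] at this
    rw [eq_div_iff (by norm_num)] at this
    exact_mod_cast this
  have h10 : B 1 0 = -11 * A 0 1 := by
    have := hentry 1 0
    simp only [coe_mapSL_apply, coe_gamma2_mul_mapSL_mul_gamma2_inv, of_apply, cons_val',
      cons_val_zero, cons_val_one, cons_val_fin_one] at this
    exact_mod_cast this
  rw [SetLike.mem_coe, Gamma0_mem, ZMod.intCast_zmod_eq_zero_iff_dvd, h10, neg_mul,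
    dvd_neg] at hB
  exact ⟨⟨-B 0 1, by linarith⟩, hB⟩

def gamma0Witness (n : ℕ) : SL(2, ℤ) :=
  ⟨!![1, 1; (n : ℤ), n + 1], by simp [det_fin_two_of]⟩

lemma gamma0Witness_mem_Gamma0 (n : ℕ) : gamma0Witness n ∈ Gamma0 n := by
  rw [Gamma0_mem]
  simp [gamma0Witness]

theorem gamma2_not_normalizes_Gamma0_general (n : ℕ) (hne : n ≠ 11) :
    ∃ A ∈ CongruenceSubgroup.Gamma0 n,
      gamma2 * mapSL A * gamma2⁻¹ ∉
        Subgroup.map mapSL (CongruenceSubgroup.Gamma0 n) := by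
  refine ⟨gamma0Witness n, gamma0Witness_mem_Gamma0 n, fun h => hne ?_⟩
  obtain ⟨h11, hn⟩ := dvd_of_gamma2_conj_mem_map_Gamma0 h
  simp only [gamma0Witness, of_apply, cons_val', cons_val_zero, cons_val_one, mul_one] at h11 hn
  exact Nat.dvd_antisymm (Int.natCast_dvd_natCast.mp hn) (Int.natCast_dvd_natCast.mp h11)

/-- For every `n ≥ 1` with `n ≠ 11`, the matrix `γ₂ = [[0,−1/√11],[√11,0]]` fails to
normalize the image of `Γ₀(n)` in `SL(2,ℝ)`. -/
theorem gamma2_not_normalizes_Gamma0 (n : ℕ) (hn : 1 ≤ n) (hne : n ≠ 11) :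
    ∃ A ∈ CongruenceSubgroup.Gamma0 n,
      gamma2 * mapSL A * gamma2⁻¹ ∉
        Subgroup.map mapSL (CongruenceSubgroup.Gamma0 n) :=
  gamma2_not_normalizes_Gamma0_general n hne
end
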